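/- arXiv:math/9810055 — 4 statements merged into one kernel-verified Lean document; each statement's English description precedes it below -/
import Mathlib

section
/- Define χ_r(a) = ∏_{k=1}^{r} Y_{aq^{r−2k+1}} · ( ∑_{i=0}^{r} ∏_{j=1}^{i} A_{aq^{r−2j+2}}^{−1} ) in ℤ[Y_{q^n}^{±1} : n ∈ ℤ], where A_a = Y_{aq}Y_{aq^{−1}}. Then for r ≥ 1, the unique monomial of χ_r(a) that is dominant (i.e., a product of the Y's with only nonnegative exponents) is the leading monomial ∏_{k=1}^{r} Y_{aq^{r−2k+1}}; every other monomial in the sum contains some variable with a strictly negative exponent. -/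
/-- The multiplicative group of Laurent monomials in the variables `Y_{q^n}`, `n ∈ ℤ`
(invertible monomials of `ℤ[Y_{q^n}^{±1} : n ∈ ℤ]`); the exponent of `Y_{q^n}` in a
monomial `M` is `(Multiplicative.toAdd M) n`. -/
abbrev Mon : Type := Multiplicative (ℤ →₀ ℤ)

/-- The variable `Y_{q^n}`. -/
noncomputable def Ym (n : ℤ) : Mon := Multiplicative.ofAdd (Finsupp.single n 1)

/-- `A_{q^n} = Y_{q^{n+1}} · Y_{q^{n-1}}`. -/
noncomputable def Am (n : ℤ) : Mon := Ym (n + 1) * Ym (n - 1)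

/-- the monomials of `χ_r(a) = ∏_{k=1}^{r} Y_{aq^{r−2k+1}}
(∑_{i=0}^{r} ∏_{j=1}^{i} A_{aq^{r−2j+2}}^{−1})` (here with `a = 1`) are
`M_i = ∏_{k=1}^{r} Y_{q^{r−2k+1}} · ∏_{j=1}^{i} A_{q^{r−2j+2}}^{−1}` for `0 ≤ i ≤ r`;
for `r ≥ 1`, the monomial `M_i` is dominant (all exponents nonnegative) if and only if
`i = 0`, i.e. the leading monomial is the unique dominant one and every other monomial
contains a variable with strictly negative exponent. -/
theorem stmt_4 (r : ℕ) (hr : 1 ≤ r) (i : ℕ) (hi : i ≤ r) :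
    (∀ n : ℤ, 0 ≤ Multiplicative.toAdd
        ((∏ k ∈ Finset.Icc 1 r, Ym ((r : ℤ) - 2 * k + 1)) *
          (∏ j ∈ Finset.Icc 1 i, (Am ((r : ℤ) - 2 * j + 2))⁻¹)) n)
      ↔ i = 0 := by
  constructor
  · intro h
    by_contra hi0
    have hi1 : 1 ≤ i := Nat.one_le_iff_ne_zero.mpr hi0
    have h1 := h ((r : ℤ) + 1)
    simp only [Ym, Am, toAdd_mul, toAdd_prod, toAdd_inv, toAdd_ofAdd,
      Finsupp.add_apply, Finsupp.coe_finset_sum, Finset.sum_apply,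
      Finsupp.neg_apply, Finsupp.single_apply] at h1
    rw [Finset.sum_eq_zero, Finset.sum_eq_single 1] at h1
    · simp at h1
      rw [if_neg (show ¬((r:ℤ) - 1 = (r:ℤ) + 1) by omega)] at h1
      omega
    · intro j hj hj1
      simp only [Finset.mem_Icc] at hj
      have : ¬ ((r:ℤ) - 2*j + 2 + 1 = (r:ℤ)+1) := by
        intro hh; apply hj1; omega
      have h2 : ¬ ((r:ℤ) - 2*j + 2 - 1 = (r:ℤ)+1) := by omega
      simp [this, h2]
    · intro h1; exact absurd (Finset.mem_Icc.mpr ⟨le_refl 1, hi1⟩) h1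
    · intro k hk
      simp only [Finset.mem_Icc] at hk
      have : ¬ ((r:ℤ) - 2*k + 1 = (r:ℤ)+1) := by omega
      simp [this]
  · rintro rfl n
    rw [show Finset.Icc 1 0 = (∅ : Finset ℕ) from Finset.Icc_eq_empty (by omega),
      Finset.prod_empty, mul_one]
    simp only [Ym, toAdd_prod, toAdd_ofAdd, Finsupp.coe_finset_sum,
      Finset.sum_apply, Finsupp.single_apply]
    exact Finset.sum_nonneg fun k _ => by positivity
end

section
/- Let R = ℤ[y_n^{±1} : n ∈ ℤ] and let S: R → R be the ℤ-linear derivation determined by S(y_n) = y_n · ∏_{i=1}^{n} y_i y_{i−1} for n ≥ 0 and S(y_n) = y_n · ∏_{i=0}^{n+1} y_i^{−1} y_{i−1}^{−1} for n < 0 (with the Leibniz rule, so S(y_n^{−1}) = −y_n^{−2}S(y_n)). Then the kernel of S restricted to the subring ℤ[y_n, y_{n+1}^{−1} : n ≥ 0] is exactly the polynomial subring ℤ[t_n : n ≥ 0], where t_n = y_n + y_{n+1}^{−1}. -/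
/-- The Laurent polynomial ring `R = ℤ[y_n^{±1} : n ∈ ℤ]`, realized as the group
algebra of the free abelian group `ℤ^{(ℤ)}` of exponents. -/
abbrev LR : Type := AddMonoidAlgebra ℤ (ℤ →₀ ℤ)

/-- The variable `y_n`. -/
noncomputable def yv (n : ℤ) : LR := AddMonoidAlgebra.single (Finsupp.single n 1) 1

/-- The inverse variable `y_n⁻¹`. -/
noncomputable def yvinv (n : ℤ) : LR := AddMonoidAlgebra.single (Finsupp.single n (-1)) 1

/-- The exponent of the monomial `S(y_n)/y_n`, namely that of
`∏_{i=1}^{n} y_i y_{i−1}` for `n ≥ 0` and of `∏_{i=0}^{n+1} y_i^{−1} y_{i−1}^{−1}`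
for `n < 0`. -/
noncomputable def gExp (n : ℤ) : ℤ →₀ ℤ :=
  if 0 ≤ n then
    ∑ i ∈ Finset.range n.toNat, (Finsupp.single ((i : ℤ) + 1) 1 + Finsupp.single (i : ℤ) 1)
  else
    -∑ i ∈ Finset.range (-n).toNat, (Finsupp.single (-(i : ℤ)) 1 + Finsupp.single (-(i : ℤ) - 1) 1)

/-- The screening operator `S : R → R`: the `ℤ`-linear derivation with
`S(y_n) = y_n · ∏_{i=1}^{n} y_i y_{i−1}` for `n ≥ 0` and
`S(y_n) = y_n · ∏_{i=0}^{n+1} y_i^{−1} y_{i−1}^{−1}` for `n < 0` (so, by the Leibniz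
rule, on a monomial `y^e` it acts as multiplication by `∑_n e_n · (S(y_n)/y_n)`). -/
noncomputable def Scr (f : LR) : LR :=
  Finsupp.sum f.coeff fun d c =>
    c • ((∑ n ∈ d.support, d n • (AddMonoidAlgebra.single (gExp n) (1 : ℤ) : LR)) *
      AddMonoidAlgebra.single d 1)

open Finsupp AddMonoidAlgebra

noncomputable def Gd (d : ℤ →₀ ℤ) : LR :=
  ∑ n ∈ d.support, d n • (AddMonoidAlgebra.single (gExp n) (1 : ℤ) : LR)

lemma Gd_eq_sum (d : ℤ →₀ ℤ) : Gd d = d.sum fun n k => k • (AddMonoidAlgebra.single (gExp n) (1 : ℤ) : LR) := rfl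

lemma Gd_add (d e : ℤ →₀ ℤ) : Gd (d + e) = Gd d + Gd e := by
  simp only [Gd_eq_sum]
  exact Finsupp.sum_add_index' (fun n => zero_smul _ _) (fun n k l => add_smul _ _ _)

lemma Gd_single (n : ℤ) (k : ℤ) : Gd (Finsupp.single n k) = k • (AddMonoidAlgebra.single (gExp n) (1 : ℤ) : LR) := by
  rw [Gd_eq_sum]
  exact Finsupp.sum_single_index (zero_smul _ _)

lemma Scr_def (f : LR) : Scr f = f.coeff.sum fun d c => c • (Gd d * AddMonoidAlgebra.single d 1) := rfl

lemma Scr_single (d : ℤ →₀ ℤ) (c : ℤ) :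
    Scr (AddMonoidAlgebra.single d c) = c • (Gd d * AddMonoidAlgebra.single d 1) := by
  rw [Scr_def, AddMonoidAlgebra.coeff_single]
  exact Finsupp.sum_single_index (zero_smul _ _)

lemma Scr_add (f g : LR) : Scr (f + g) = Scr f + Scr g := by
  simp only [Scr_def, AddMonoidAlgebra.coeff_add]
  exact Finsupp.sum_add_index' (fun d => zero_smul _ _) (fun d c c' => add_smul _ _ _)

lemma Scr_zero : Scr 0 = 0 := by rw [Scr_def]; exact Finsupp.sum_zero_index

lemma Scr_neg (f : LR) : Scr (-f) = -Scr f := by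
  have := Scr_add f (-f)
  rw [add_neg_cancel, Scr_zero] at this
  exact eq_neg_of_add_eq_zero_right this.symm

lemma auxsmul (p : ℤ →₀ ℤ) (v : ℤ) :
    (AddMonoidAlgebra.single p v : LR) = v • AddMonoidAlgebra.single p 1 := by
  rw [AddMonoidAlgebra.smul_single', mul_one]

lemma aux1 (G : LR) (p q : ℤ →₀ ℤ) (u v : ℤ) :
    (u • (G * AddMonoidAlgebra.single p 1)) * AddMonoidAlgebra.single q v
      = (u * v) • (G * AddMonoidAlgebra.single (p + q) 1) := by
  rw [smul_mul_assoc, mul_assoc, AddMonoidAlgebra.single_mul_single, one_mul,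
    auxsmul, mul_smul_comm, smul_smul]

lemma aux2 (G : LR) (p q : ℤ →₀ ℤ) (u v : ℤ) :
    AddMonoidAlgebra.single p u * (v • (G * AddMonoidAlgebra.single q 1))
      = (u * v) • (G * AddMonoidAlgebra.single (p + q) 1) := by
  rw [mul_smul_comm, mul_left_comm, AddMonoidAlgebra.single_mul_single, mul_one,
    auxsmul, mul_smul_comm, smul_smul, mul_comm v u]

lemma Scr_mul (f g : LR) : Scr (f * g) = Scr f * g + f * Scr g := by
  induction f using AddMonoidAlgebra.induction_linear with
  | zero => simp [Scr_zero]
  | add f f' hf hf' => rw [add_mul, Scr_add, hf, hf', Scr_add, add_mul]; ring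
  | single d a =>
    induction g using AddMonoidAlgebra.induction_linear with
    | zero => simp [Scr_zero]
    | add g g' hg hg' => rw [mul_add, Scr_add, hg, hg', Scr_add, mul_add]; ring
    | single e b =>
      rw [AddMonoidAlgebra.single_mul_single, Scr_single, Scr_single, Scr_single, Gd_add,
        add_mul, smul_add, aux1, aux2]

lemma Scr_one : Scr 1 = 0 := by
  rw [AddMonoidAlgebra.one_def, Scr_single]
  have : Gd 0 = 0 := by rw [Gd_eq_sum]; exact Finsupp.sum_zero_index
  rw [this, zero_mul, smul_zero]

noncomputable def Kc : Subring LR where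
  carrier := {x | Scr x = 0}
  mul_mem' := by
    intro a b ha hb
    simp only [Set.mem_setOf_eq] at *
    rw [Scr_mul, ha, hb, zero_mul, mul_zero, add_zero]
  one_mem' := Scr_one
  add_mem' := by
    intro a b ha hb
    simp only [Set.mem_setOf_eq] at *
    rw [Scr_add, ha, hb, add_zero]
  zero_mem' := Scr_zero
  neg_mem' := by
    intro a ha
    simp only [Set.mem_setOf_eq] at *
    rw [Scr_neg, ha, neg_zero]

lemma mem_Kc {x : LR} : x ∈ Kc ↔ Scr x = 0 := Iff.rfl

lemma gExp_ofNat (n : ℕ) : gExp (n : ℤ) =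
    ∑ i ∈ Finset.range n, (Finsupp.single ((i : ℤ) + 1) 1 + Finsupp.single (i : ℤ) 1) := by
  rw [gExp, if_pos (Int.natCast_nonneg n)]
  norm_num

lemma gExp_zero : gExp 0 = 0 := by
  have := gExp_ofNat 0
  simpa using this

lemma gExp_succ (n : ℕ) : gExp ((n : ℤ) + 1) =
    gExp (n : ℤ) + (Finsupp.single ((n : ℤ) + 1) 1 + Finsupp.single (n : ℤ) 1) := by
  rw [show ((n : ℤ) + 1) = ((n + 1 : ℕ) : ℤ) by push_cast; ring, gExp_ofNat, gExp_ofNat,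
    Finset.sum_range_succ]
  push_cast
  ring_nf

lemma gExp_apply_lt (n : ℕ) (i : ℤ) (h : (n : ℤ) < i) : gExp (n : ℤ) i = 0 := by
  rw [gExp_ofNat, Finset.sum_apply']
  refine Finset.sum_eq_zero fun j hj => ?_
  have hj' : (j : ℤ) < (n : ℤ) := by exact_mod_cast Finset.mem_range.mp hj
  rw [Finsupp.add_apply, Finsupp.single_apply, Finsupp.single_apply,
    if_neg (by omega), if_neg (by omega), add_zero]

lemma gExp_apply_self (n : ℕ) : gExp ((n : ℤ) + 1) ((n : ℤ) + 1) = 1 := by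
  rw [gExp_succ, Finsupp.add_apply, Finsupp.add_apply, gExp_apply_lt n _ (by omega),
    Finsupp.single_apply, Finsupp.single_apply, if_pos rfl, if_neg (by omega)]
  ring

lemma Scr_eq (f : LR) : Scr f = ∑ d ∈ f.coeff.support, ∑ n ∈ d.support,
    AddMonoidAlgebra.single (gExp n + d) (f.coeff d * d n) := by
  rw [Scr_def, Finsupp.sum]
  refine Finset.sum_congr rfl fun d hd => ?_
  rw [Gd, Finset.sum_mul, Finset.smul_sum]
  refine Finset.sum_congr rfl fun n hn => ?_
  rw [smul_mul_assoc, AddMonoidAlgebra.single_mul_single, one_mul, smul_smul,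
    AddMonoidAlgebra.smul_single', mul_one]

lemma Scr_apply (f : LR) (w : ℤ →₀ ℤ) : (Scr f).coeff w = ∑ d ∈ f.coeff.support, ∑ n ∈ d.support,
    (if gExp n + d = w then f.coeff d * d n else 0) := by
  rw [Scr_eq, AddMonoidAlgebra.coeff_sum, Finset.sum_apply']
  refine Finset.sum_congr rfl fun d hd => ?_
  rw [AddMonoidAlgebra.coeff_sum, Finset.sum_apply']
  refine Finset.sum_congr rfl fun n hn => ?_
  rw [AddMonoidAlgebra.coeff_single, Finsupp.single_apply]

lemma texp_eq (n : ℕ) : gExp ((n : ℤ) + 1) + Finsupp.single ((n : ℤ) + 1) (-1) =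
    gExp (n : ℤ) + Finsupp.single (n : ℤ) 1 := by
  rw [gExp_succ]
  ext i
  simp only [Finsupp.add_apply, Finsupp.single_apply]
  split_ifs <;> linarith

lemma t_ker (n : ℕ) : Scr (yv (n : ℤ) + yvinv ((n : ℤ) + 1)) = 0 := by
  rw [Scr_add, yv, yvinv, Scr_single, Scr_single, Gd_single, Gd_single, one_smul, one_smul,
    smul_mul_assoc, AddMonoidAlgebra.single_mul_single, AddMonoidAlgebra.single_mul_single,
    texp_eq, one_smul, neg_one_smul, add_neg_cancel]

noncomputable def suppSubring (P : (ℤ →₀ ℤ) → Prop) (h0 : P 0)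
    (hadd : ∀ a b, P a → P b → P (a + b)) : Subring LR where
  carrier := {x | ∀ d ∈ x.coeff.support, P d}
  one_mem' := by
    intro d hd
    have : d ∈ ({0} : Finset (ℤ →₀ ℤ)) := Finsupp.support_single_subset hd
    simp only [Finset.mem_singleton] at this
    exact this ▸ h0
  mul_mem' := by
    classical
    intro a b ha hb d hd
    have := AddMonoidAlgebra.support_coeff_mul_subset a b hd
    rw [Finset.mem_add] at this
    obtain ⟨x, hx, y, hy, rfl⟩ := this
    exact hadd x y (ha x hx) (hb y hy)
  add_mem' := by
    intro a b ha hb d hd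
    rw [AddMonoidAlgebra.coeff_add] at hd
    have := Finsupp.support_add hd
    rw [Finset.mem_union] at this
    rcases this with h | h
    · exact ha d h
    · exact hb d h
  zero_mem' := by
    intro d hd
    simp at hd
  neg_mem' := by
    intro a ha d hd
    rw [AddMonoidAlgebra.coeff_neg, Finsupp.support_neg] at hd
    exact ha d hd

lemma mem_suppSubring {P h0 hadd x} :
    x ∈ suppSubring P h0 hadd ↔ ∀ d ∈ x.coeff.support, P d := Iff.rfl

lemma single_mem_suppSubring {P h0 hadd} {d : ℤ →₀ ℤ} (c : ℤ) (hP : P d) :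
    AddMonoidAlgebra.single d c ∈ suppSubring P h0 hadd := by
  rw [mem_suppSubring]
  intro e he
  have : e ∈ ({d} : Finset (ℤ →₀ ℤ)) := Finsupp.support_single_subset he
  simp only [Finset.mem_singleton] at this
  exact this ▸ hP

lemma lv_mul {i : ℤ} {a b : ℤ} {f g : LR} (hf : ∀ d ∈ f.coeff.support, a ≤ d i)
    (hg : ∀ d ∈ g.coeff.support, b ≤ d i) : ∀ d ∈ (f * g).coeff.support, a + b ≤ d i := by
  classical
  intro d hd
  have := AddMonoidAlgebra.support_coeff_mul_subset f g hd
  rw [Finset.mem_add] at this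
  obtain ⟨x, hx, y, hy, rfl⟩ := this
  rw [Finsupp.add_apply]
  exact add_le_add (hf x hx) (hg y hy)

lemma lemA (j : ℕ) (f : LR) (hb : ∀ d ∈ f.coeff.support, ∀ i : ℤ, d i ≠ 0 → 0 ≤ i ∧ i ≤ (j : ℤ))
    (hker : Scr f = 0) : ∀ d ∈ f.coeff.support, d (j : ℤ) ≤ 0 := by
  by_contra hcon
  push_neg at hcon
  obtain ⟨d₀, hd₀, hpos⟩ := hcon
  obtain ⟨dm, hdm, hmax⟩ := Finset.exists_max_image f.coeff.support (fun d => d (j : ℤ)) ⟨d₀, hd₀⟩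
  have hK : 0 < dm (j : ℤ) := lt_of_lt_of_le hpos (hmax d₀ hd₀)
  set w := gExp (j : ℤ) + dm with hw
  have hgj : gExp (j : ℤ) (j : ℤ) = 1 ∨ (j = 0 ∧ gExp (j : ℤ) (j : ℤ) = 0) := by
    cases j with
    | zero => right; constructor; rfl; rw [show ((0:ℕ):ℤ) = 0 from rfl, gExp_zero]; rfl
    | succ j' =>
      left
      have := gExp_apply_self j'
      push_cast
      push_cast at this
      exact this
  have key : ∀ d ∈ f.coeff.support, ∀ n ∈ d.support, (gExp n + d = w) → d = dm ∧ n = (j : ℤ) := by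
    intro d hd n hn heq
    have hn0 := Finsupp.mem_support_iff.mp hn
    obtain ⟨h0n, hnj⟩ := hb d hd n hn0
    rcases eq_or_lt_of_le hnj with heqn | hltn
    · refine ⟨?_, heqn⟩
      rw [heqn] at heq
      exact add_left_cancel heq
    · exfalso
      obtain ⟨m, rfl⟩ := Int.eq_ofNat_of_zero_le h0n
      have hms : (m : ℤ) < (j : ℤ) := hltn
      have h1 : gExp (m : ℤ) (j : ℤ) = 0 := gExp_apply_lt m _ hms
      have h2 := DFunLike.congr_fun heq (j : ℤ)
      rw [Finsupp.add_apply, Finsupp.add_apply, h1, zero_add] at h2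
      rcases hgj with hg1 | ⟨hj0, _⟩
      · rw [hg1] at h2
        have := hmax d hd
        omega
      · omega
  have h0 : (Scr f).coeff w = 0 := by rw [hker]; rfl
  rw [Scr_apply] at h0
  have h1 : ∀ d ∈ f.coeff.support, (∑ n ∈ d.support, ite (gExp n + d = w) (f.coeff d * d n) 0)
      = ite (d = dm) (f.coeff dm * dm (j : ℤ)) 0 := by
    intro d hd
    by_cases hddm : d = dm
    · subst hddm
      rw [if_pos rfl]
      have hjmem : (j : ℤ) ∈ d.support := Finsupp.mem_support_iff.mpr (by omega)
      rw [Finset.sum_eq_single_of_mem (j : ℤ) hjmem]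
      · rw [if_pos rfl]
      · intro n hn hne
        rw [if_neg]
        intro hcontra
        exact hne (key d hd n hn hcontra).2
    · rw [if_neg hddm]
      refine Finset.sum_eq_zero fun n hn => ?_
      rw [if_neg]
      intro hcontra
      exact hddm (key d hd n hn hcontra).1
  rw [Finset.sum_congr rfl h1, Finset.sum_ite_eq' f.coeff.support dm, if_pos hdm] at h0
  have hf0 : f.coeff dm ≠ 0 := Finsupp.mem_support_iff.mp hdm
  exact mul_ne_zero hf0 (by omega) h0

noncomputable def botSlice (jz L : ℤ) (f : LR) : LR := AddMonoidAlgebra.ofCoeff (f.coeff.filter (fun d => d jz = L))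

lemma lemB (j : ℕ) (hj : 1 ≤ j) (f : LR) (L : ℤ)
    (hb : ∀ d ∈ f.coeff.support, ∀ i : ℤ, d i ≠ 0 → 0 ≤ i ∧ i ≤ (j : ℤ))
    (hmin : ∀ d ∈ f.coeff.support, L ≤ d (j : ℤ))
    (hker : Scr f = 0) :
    Scr (botSlice (j : ℤ) L f) =
      L • ((AddMonoidAlgebra.single (gExp (j : ℤ)) 1 : LR) * botSlice (j : ℤ) L f) := by
  obtain ⟨j', rfl⟩ : ∃ j'', j = j'' + 1 := ⟨j - 1, by omega⟩
  have hg1 : gExp ((j' + 1 : ℕ) : ℤ) ((j' + 1 : ℕ) : ℤ) = 1 := by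
    have := gExp_apply_self j'
    push_cast
    push_cast at this
    exact this
  set jz : ℤ := ((j' + 1 : ℕ) : ℤ) with hjz
  set g : ℤ →₀ ℤ := gExp jz with hgdef
  set p : (ℤ →₀ ℤ) → Prop := fun d => d jz = L with hp
  set φ : LR := botSlice jz L f with hφ
  have hφ' : φ.coeff = f.coeff.filter p := rfl
  have hφsupp : ∀ d, d ∈ φ.coeff.support ↔ d ∈ f.coeff.support ∧ p d := by
    intro d
    rw [hφ', Finsupp.support_filter, Finset.mem_filter]
  have hφapp : ∀ d ∈ φ.coeff.support, φ.coeff d = f.coeff d := by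
    intro d hd
    exact Finsupp.filter_apply_pos p f.coeff ((hφsupp d).mp hd).2
  have hgsmall : ∀ n : ℤ, n ≠ jz → 0 ≤ n → n ≤ jz → gExp n jz = 0 := by
    intro n hne h0 hle
    obtain ⟨m, rfl⟩ := Int.eq_ofNat_of_zero_le h0
    exact gExp_apply_lt m jz (by omega)
  ext w
  rw [AddMonoidAlgebra.coeff_smul_apply, AddMonoidAlgebra.coeff_single_mul_apply, one_mul, Scr_apply]
  -- inner splitting
  have inner : ∀ d ∈ φ.coeff.support, (∑ n ∈ d.support, ite (gExp n + d = w) (φ.coeff d * d n) 0)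
      = (∑ n ∈ d.support.erase jz, ite (gExp n + d = w) (f.coeff d * d n) 0)
        + ite (g + d = w) (f.coeff d * L) 0 := by
    intro d hd
    have hpd : d jz = L := ((hφsupp d).mp hd).2
    simp only [hφapp d hd]
    by_cases hjs : jz ∈ d.support
    · rw [← Finset.sum_erase_add _ _ hjs, hpd]
    · have hL0 : L = 0 := by rw [← hpd]; exact Finsupp.notMem_support_iff.mp hjs
      rw [Finset.erase_eq_of_notMem hjs, hL0, mul_zero, ite_self, add_zero]
  rw [Finset.sum_congr rfl inner, Finset.sum_add_distrib]
  -- second part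
  have cond_iff : ∀ d : ℤ →₀ ℤ, (g + d = w) ↔ (d = -g + w) := by
    intro d
    constructor
    · intro h; rw [← h]; abel
    · intro h; rw [h]; abel
  have part2 : (∑ d ∈ φ.coeff.support, ite (g + d = w) (f.coeff d * L) 0) = φ.coeff (-g + w) * L := by
    simp only [cond_iff]
    rw [Finset.sum_ite_eq' φ.coeff.support (-g + w) (fun d => f.coeff d * L)]
    by_cases hmem : -g + w ∈ φ.coeff.support
    · rw [if_pos hmem, ← hφapp _ hmem]
    · rw [if_neg hmem, Finsupp.notMem_support_iff.mp hmem, zero_mul]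
  rw [part2]
  by_cases hwj : w jz = L
  -- case w j = L
  · have hφw : φ.coeff (-g + w) = 0 := by
      refine Finsupp.filter_apply_neg p f.coeff ?_
      intro hcontra
      have h2 : (-g + w) jz = L := hcontra
      rw [Finsupp.add_apply, Finsupp.neg_apply, hg1] at h2
      omega
    rw [hφw, zero_mul, smul_zero, add_zero]
    have hg1' : (gExp jz) jz = 1 := hg1
    have hSfw : (∑ d ∈ f.coeff.support, ∑ n ∈ d.support, ite (gExp n + d = w) (f.coeff d * d n) 0) = 0 := by
      rw [← Scr_apply, hker]; rfl
    have step1 : (∑ d ∈ φ.coeff.support, ∑ n ∈ d.support.erase jz, ite (gExp n + d = w) (f.coeff d * d n) 0)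
        = ∑ d ∈ φ.coeff.support, ∑ n ∈ d.support, ite (gExp n + d = w) (f.coeff d * d n) 0 := by
      refine Finset.sum_congr rfl fun d hd => ?_
      have hpd : d jz = L := ((hφsupp d).mp hd).2
      by_cases hjs : jz ∈ d.support
      · conv_rhs => rw [← Finset.sum_erase_add _ _ hjs]
        have hzero : ite (gExp jz + d = w) (f.coeff d * d jz) 0 = 0 := by
          rw [if_neg]
          intro hcontra
          have h2 := DFunLike.congr_fun hcontra jz
          rw [Finsupp.add_apply, hg1'] at h2
          omega
        rw [hzero, add_zero]
      · rw [Finset.erase_eq_of_notMem hjs]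
    have step2 : (∑ d ∈ φ.coeff.support, ∑ n ∈ d.support, ite (gExp n + d = w) (f.coeff d * d n) 0)
        = ∑ d ∈ f.coeff.support, ∑ n ∈ d.support, ite (gExp n + d = w) (f.coeff d * d n) 0 := by
      refine Finset.sum_subset (fun d hd => ((hφsupp d).mp hd).1) ?_
      intro d hd hnd
      have hne : d jz ≠ L := fun h => hnd ((hφsupp d).mpr ⟨hd, h⟩)
      have hgt : L < d jz := lt_of_le_of_ne (hmin d hd) (Ne.symm hne)
      refine Finset.sum_eq_zero fun n hn => ?_
      obtain ⟨h0n, hnj⟩ := hb d hd n (Finsupp.mem_support_iff.mp hn)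
      rw [if_neg]
      intro hcontra
      have h2 := DFunLike.congr_fun hcontra jz
      rw [Finsupp.add_apply] at h2
      by_cases hnjz : n = jz
      · rw [hnjz, hg1'] at h2
        omega
      · rw [hgsmall n hnjz h0n hnj] at h2
        omega
    rw [step1, step2]
    exact hSfw
  -- case w j ≠ L
  · have hT1 : (∑ d ∈ φ.coeff.support, ∑ n ∈ d.support.erase jz, ite (gExp n + d = w) (f.coeff d * d n) 0) = 0 := by
      refine Finset.sum_eq_zero fun d hd => Finset.sum_eq_zero fun n hn => ?_
      have hne : n ≠ jz := Finset.ne_of_mem_erase hn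
      have hns : n ∈ d.support := Finset.mem_of_mem_erase hn
      have hdf : d ∈ f.coeff.support := ((hφsupp d).mp hd).1
      obtain ⟨h0n, hnj⟩ := hb d hdf n (Finsupp.mem_support_iff.mp hns)
      have hgn : gExp n jz = 0 := hgsmall n hne h0n hnj
      rw [if_neg]
      intro hcontra
      have := DFunLike.congr_fun hcontra jz
      rw [Finsupp.add_apply, hgn, zero_add] at this
      have hpd : d jz = L := ((hφsupp d).mp hd).2
      omega
    rw [hT1, zero_add, smul_eq_mul, mul_comm]

def dOK (N : ℕ) (d : ℤ →₀ ℤ) : Prop :=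
  (∀ i : ℤ, d i ≠ 0 → 0 ≤ i ∧ i ≤ (N : ℤ)) ∧ 0 ≤ d 0

lemma dOK_zero (N : ℕ) : dOK N 0 := by
  constructor
  · intro i hi; simp at hi
  · simp

lemma dOK_add (N : ℕ) : ∀ a b, dOK N a → dOK N b → dOK N (a + b) := by
  intro a b ha hb
  constructor
  · intro i hi
    rw [Finsupp.add_apply] at hi
    rcases ne_or_eq (a i) 0 with h | h
    · exact ha.1 i h
    · exact hb.1 i (by omega)
  · rw [Finsupp.add_apply]
    exact add_nonneg ha.2 hb.2

noncomputable def AOKs (N : ℕ) : Subring LR := suppSubring (dOK N) (dOK_zero N) (dOK_add N)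

def dOKall (d : ℤ →₀ ℤ) : Prop := (∀ i : ℤ, d i ≠ 0 → 0 ≤ i) ∧ 0 ≤ d 0

lemma dOKall_zero : dOKall 0 := by
  constructor
  · intro i hi; simp at hi
  · simp

lemma dOKall_add : ∀ a b, dOKall a → dOKall b → dOKall (a + b) := by
  intro a b ha hb
  constructor
  · intro i hi
    rw [Finsupp.add_apply] at hi
    rcases ne_or_eq (a i) 0 with h | h
    · exact ha.1 i h
    · exact hb.1 i (by omega)
  · rw [Finsupp.add_apply]
    exact add_nonneg ha.2 hb.2

noncomputable def AOKall : Subring LR := suppSubring dOKall dOKall_zero dOKall_add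

noncomputable def Tsub : Subring LR :=
  Subring.closure {g | ∃ n : ℕ, g = yv n + yvinv ((n : ℤ) + 1)}

lemma lv_single {q : ℤ →₀ ℤ} (c : ℤ) {i a : ℤ} (h : a ≤ q i) :
    ∀ d ∈ (AddMonoidAlgebra.single q c : LR).coeff.support, a ≤ d i := by
  intro d hd
  have := Finsupp.support_single_subset hd
  simp only [Finset.mem_singleton] at this
  exact this ▸ h

lemma lv_add {i a : ℤ} {f g : LR} (hf : ∀ d ∈ f.coeff.support, a ≤ d i)
    (hg : ∀ d ∈ g.coeff.support, a ≤ d i) : ∀ d ∈ (f + g).coeff.support, a ≤ d i := by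
  intro d hd
  rw [AddMonoidAlgebra.coeff_add] at hd
  have := Finsupp.support_add hd
  rw [Finset.mem_union] at this
  rcases this with h | h
  · exact hf d h
  · exact hg d h

lemma mem_T_of_all_zero (f : LR) (h : ∀ d ∈ f.coeff.support, d = 0) : f ∈ Tsub := by
  have hf : f = AddMonoidAlgebra.single 0 (f.coeff 0) := by
    ext w
    by_cases hw : w = 0
    · subst hw; rw [AddMonoidAlgebra.coeff_single, Finsupp.single_apply, if_pos rfl]
    · rw [AddMonoidAlgebra.coeff_single, Finsupp.single_apply, if_neg (fun hc => hw hc.symm)]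
      by_contra hc
      exact hw (h w (Finsupp.mem_support_iff.mpr hc))
  rw [hf, auxsmul]
  rw [show (AddMonoidAlgebra.single (0 : ℤ →₀ ℤ) (1:ℤ) : LR) = 1 from rfl]
  exact zsmul_mem (Subring.one_mem Tsub) (f.coeff 0)

lemma yvinv_pow (j : ℤ) (q : ℕ) :
    (yvinv j) ^ q = AddMonoidAlgebra.single (Finsupp.single j (-(q : ℤ))) 1 := by
  rw [yvinv, AddMonoidAlgebra.single_pow, one_pow, Finsupp.smul_single]
  congr 1
  simp

lemma pow_sub_identity (t u : LR) (k : ℕ) :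
    t ^ (k + 2) - u ^ (k + 2) = (t ^ (k + 1) - u ^ (k + 1)) * t + u ^ (k + 1) * (t - u) := by
  ring

lemma t_level (N : ℕ) :
    ∀ d ∈ (yv (N : ℤ) + yvinv ((N : ℤ) + 1) : LR).coeff.support, (-1 : ℤ) ≤ d ((N : ℤ) + 1) := by
  apply lv_add
  · apply lv_single
    rw [Finsupp.single_apply, if_neg (by omega)]; omega
  · apply lv_single
    rw [Finsupp.single_apply, if_pos rfl]

lemma yvN_level (N : ℕ) :
    ∀ d ∈ (yv (N : ℤ) : LR).coeff.support, (0 : ℤ) ≤ d ((N : ℤ) + 1) := by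
  apply lv_single
  rw [Finsupp.single_apply, if_neg (by omega)]

lemma tu_pow_level (N : ℕ) : ∀ (k : ℕ),
    ∀ d ∈ ((yv (N : ℤ) + yvinv ((N : ℤ) + 1)) ^ (k + 1)
        - (yvinv ((N : ℤ) + 1)) ^ (k + 1) : LR).coeff.support,
      -(k : ℤ) ≤ d ((N : ℤ) + 1) := by
  intro k
  induction k with
  | zero =>
    have h1 : ((yv (N : ℤ) + yvinv ((N : ℤ) + 1)) ^ (0 + 1)
        - (yvinv ((N : ℤ) + 1)) ^ (0 + 1) : LR) = yv (N : ℤ) := by ring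
    rw [h1]
    intro d hd
    have := yvN_level N d hd
    omega
  | succ k ihk =>
    have h1 : ((yv (N : ℤ) + yvinv ((N : ℤ) + 1)) ^ (k + 1 + 1)
        - (yvinv ((N : ℤ) + 1)) ^ (k + 1 + 1) : LR)
        = ((yv (N : ℤ) + yvinv ((N : ℤ) + 1)) ^ (k + 1) - (yvinv ((N : ℤ) + 1)) ^ (k + 1))
            * (yv (N : ℤ) + yvinv ((N : ℤ) + 1))
          + (yvinv ((N : ℤ) + 1)) ^ (k + 1) * yv (N : ℤ) := by
      have := pow_sub_identity (yv (N : ℤ) + yvinv ((N : ℤ) + 1)) (yvinv ((N : ℤ) + 1)) k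
      calc ((yv (N : ℤ) + yvinv ((N : ℤ) + 1)) ^ (k + 1 + 1)
            - (yvinv ((N : ℤ) + 1)) ^ (k + 1 + 1) : LR)
          = (yv (N : ℤ) + yvinv ((N : ℤ) + 1)) ^ (k + 2)
            - (yvinv ((N : ℤ) + 1)) ^ (k + 2) := by norm_num
        _ = _ := by rw [this]; ring
    rw [h1]
    intro d hd
    have hlev : ∀ e ∈ (((yv (N : ℤ) + yvinv ((N : ℤ) + 1)) ^ (k + 1)
        - (yvinv ((N : ℤ) + 1)) ^ (k + 1))
            * (yv (N : ℤ) + yvinv ((N : ℤ) + 1)) : LR).coeff.support,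
        (-(k : ℤ)) + (-1) ≤ e ((N : ℤ) + 1) := lv_mul ihk (t_level N)
    have hlev2 : ∀ e ∈ ((yvinv ((N : ℤ) + 1)) ^ (k + 1) * yv (N : ℤ) : LR).coeff.support,
        (-((k : ℤ) + 1)) + 0 ≤ e ((N : ℤ) + 1) := by
      apply lv_mul _ (yvN_level N)
      rw [yvinv_pow]
      apply lv_single
      rw [Finsupp.single_apply, if_pos rfl]
      push_cast
      omega
    have := lv_add (i := (N : ℤ) + 1) (a := -((k : ℤ) + 1)) (fun e he => by have := hlev e he; omega)
      (fun e he => by have := hlev2 e he; omega) d hd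
    push_cast
    omega

lemma dOK_mono {N : ℕ} {d : ℤ →₀ ℤ} (h : dOK N d) : dOK (N + 1) d := by
  refine ⟨fun i hi => ?_, h.2⟩
  obtain ⟨h1, h2⟩ := h.1 i hi
  refine ⟨h1, ?_⟩
  push_cast
  push_cast at h2
  omega

lemma step (N m : ℕ) (f : LR)
    (hsupp : ∀ d ∈ f.coeff.support, dOK (N + 1) d)
    (hlev : ∀ d ∈ f.coeff.support, -((m : ℤ) + 1) ≤ d ((N : ℤ) + 1))
    (hker : Scr f = 0)
    (ih : ∀ g : LR, (∀ d ∈ g.coeff.support, dOK N d) → Scr g = 0 → g ∈ Tsub)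
    (ihm : ∀ g : LR, (∀ d ∈ g.coeff.support, dOK (N + 1) d) →
        (∀ d ∈ g.coeff.support, -(m : ℤ) ≤ d ((N : ℤ) + 1)) → Scr g = 0 → g ∈ Tsub) :
    f ∈ Tsub := by
  classical
  have hcast : ((N + 1 : ℕ) : ℤ) = (N : ℤ) + 1 := by push_cast; ring
  have hφfil : (botSlice ((N : ℤ) + 1) (-((m : ℤ) + 1)) f).coeff
      = f.coeff.filter (fun d => d ((N : ℤ) + 1) = -((m : ℤ) + 1)) := rfl
  by_cases hφ0 : botSlice ((N : ℤ) + 1) (-((m : ℤ) + 1)) f = 0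
  · -- no bottom slice
    apply ihm f hsupp ?_ hker
    intro d hd
    have h1 := hlev d hd
    have hne : d ((N : ℤ) + 1) ≠ -((m : ℤ) + 1) := by
      intro hEq
      have hval : (botSlice ((N : ℤ) + 1) (-((m : ℤ) + 1)) f).coeff d = f.coeff d := by
        rw [hφfil]
        exact Finsupp.filter_apply_pos _ f.coeff hEq
      rw [hφ0] at hval
      exact Finsupp.mem_support_iff.mp hd (by rw [← hval]; rfl)
    omega
  · -- main case
    have hb' : ∀ d ∈ f.coeff.support, ∀ i : ℤ, d i ≠ 0 → 0 ≤ i ∧ i ≤ ((N + 1 : ℕ) : ℤ) :=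
      fun d hd => (hsupp d hd).1
    have hmin : ∀ d ∈ f.coeff.support, -((m : ℤ) + 1) ≤ d ((N + 1 : ℕ) : ℤ) := by
      intro d hd
      rw [hcast]
      exact hlev d hd
    have hScrφ : Scr (botSlice ((N : ℤ) + 1) (-((m : ℤ) + 1)) f)
        = (-((m : ℤ) + 1)) • ((AddMonoidAlgebra.single (gExp ((N : ℤ) + 1)) 1 : LR)
            * botSlice ((N : ℤ) + 1) (-((m : ℤ) + 1)) f) := by
      have h := lemB (N + 1) (by omega) f (-((m : ℤ) + 1)) hb' hmin hker
      rw [hcast] at h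
      exact h
    -- the shifted bottom slice h
    have hScrh : Scr ((AddMonoidAlgebra.single (Finsupp.single ((N : ℤ) + 1) ((m : ℤ) + 1)) 1 : LR)
        * botSlice ((N : ℤ) + 1) (-((m : ℤ) + 1)) f) = 0 := by
      rw [Scr_mul, hScrφ, Scr_single, Gd_single, one_smul]
      rw [smul_mul_assoc, mul_smul_comm]
      have hrearr : (AddMonoidAlgebra.single (Finsupp.single ((N : ℤ) + 1) ((m : ℤ) + 1)) 1 : LR)
          * ((AddMonoidAlgebra.single (gExp ((N : ℤ) + 1)) 1 : LR)
            * botSlice ((N : ℤ) + 1) (-((m : ℤ) + 1)) f)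
          = (AddMonoidAlgebra.single (gExp ((N : ℤ) + 1)) 1 : LR)
            * AddMonoidAlgebra.single (Finsupp.single ((N : ℤ) + 1) ((m : ℤ) + 1)) 1
            * botSlice ((N : ℤ) + 1) (-((m : ℤ) + 1)) f := by ring
      rw [hrearr, smul_mul_assoc, ← add_smul,
        show ((m : ℤ) + 1) + -((m : ℤ) + 1) = 0 by ring, zero_smul]
    have hsupph : ∀ d' ∈ ((AddMonoidAlgebra.single (Finsupp.single ((N : ℤ) + 1) ((m : ℤ) + 1)) 1 : LR)
        * botSlice ((N : ℤ) + 1) (-((m : ℤ) + 1)) f).coeff.support, dOK N d' := by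
      intro d' hd'
      have happ := AddMonoidAlgebra.coeff_single_mul_apply
        (botSlice ((N : ℤ) + 1) (-((m : ℤ) + 1)) f) (1 : ℤ)
        (Finsupp.single ((N : ℤ) + 1) ((m : ℤ) + 1)) d'
      rw [one_mul] at happ
      have hne' := Finsupp.mem_support_iff.mp hd'
      rw [happ] at hne'
      set d : ℤ →₀ ℤ := -(Finsupp.single ((N : ℤ) + 1) ((m : ℤ) + 1)) + d' with hd
      have hdsupp : d ∈ (botSlice ((N : ℤ) + 1) (-((m : ℤ) + 1)) f).coeff.support :=
        Finsupp.mem_support_iff.mpr hne'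
      rw [hφfil, Finsupp.support_filter, Finset.mem_filter] at hdsupp
      obtain ⟨hdf, hdL⟩ := hdsupp
      have hd' : ∀ i : ℤ, d' i = (Finsupp.single ((N : ℤ) + 1) ((m : ℤ) + 1)) i + d i := by
        intro i
        rw [hd]
        rw [Finsupp.add_apply, Finsupp.neg_apply]
        ring
      have hjz : d' ((N : ℤ) + 1) = 0 := by
        rw [hd' ((N : ℤ) + 1), Finsupp.single_apply, if_pos rfl]
        omega
      constructor
      · intro i hi
        by_cases hijz : i = (N : ℤ) + 1
        · exfalso; rw [hijz] at hi; exact hi hjz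
        · have hdi : d' i = d i := by
            rw [hd' i, Finsupp.single_apply, if_neg (fun hc => hijz hc.symm), zero_add]
          rw [hdi] at hi
          obtain ⟨h1, h2⟩ := (hsupp d hdf).1 i hi
          rw [hcast] at h2
          exact ⟨h1, by omega⟩
      · have hdi : d' 0 = d 0 := by
          rw [hd' 0, Finsupp.single_apply, if_neg (by omega), zero_add]
        rw [hdi]
        exact (hsupp d hdf).2
    have hhT : ((AddMonoidAlgebra.single (Finsupp.single ((N : ℤ) + 1) ((m : ℤ) + 1)) 1 : LR)
        * botSlice ((N : ℤ) + 1) (-((m : ℤ) + 1)) f) ∈ Tsub := ih _ hsupph hScrh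
    have htT : (yv (N : ℤ) + yvinv ((N : ℤ) + 1)) ∈ Tsub := Subring.subset_closure ⟨N, rfl⟩
    have hUpow : (yvinv ((N : ℤ) + 1)) ^ (m + 1)
        = (AddMonoidAlgebra.single (Finsupp.single ((N : ℤ) + 1) (-((m : ℤ) + 1))) 1 : LR) := by
      rw [yvinv_pow]
      push_cast
      rfl
    have hhu : ((AddMonoidAlgebra.single (Finsupp.single ((N : ℤ) + 1) ((m : ℤ) + 1)) 1 : LR)
        * botSlice ((N : ℤ) + 1) (-((m : ℤ) + 1)) f) * (yvinv ((N : ℤ) + 1)) ^ (m + 1)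
        = botSlice ((N : ℤ) + 1) (-((m : ℤ) + 1)) f := by
      rw [hUpow]
      have hre : ((AddMonoidAlgebra.single (Finsupp.single ((N : ℤ) + 1) ((m : ℤ) + 1)) 1 : LR)
          * botSlice ((N : ℤ) + 1) (-((m : ℤ) + 1)) f)
          * (AddMonoidAlgebra.single (Finsupp.single ((N : ℤ) + 1) (-((m : ℤ) + 1))) 1 : LR)
          = ((AddMonoidAlgebra.single (Finsupp.single ((N : ℤ) + 1) ((m : ℤ) + 1)) 1 : LR)
            * (AddMonoidAlgebra.single (Finsupp.single ((N : ℤ) + 1) (-((m : ℤ) + 1))) 1 : LR))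
            * botSlice ((N : ℤ) + 1) (-((m : ℤ) + 1)) f := by ring
      rw [hre, AddMonoidAlgebra.single_mul_single, mul_one]
      have hzero : Finsupp.single ((N : ℤ) + 1) ((m : ℤ) + 1)
          + Finsupp.single ((N : ℤ) + 1) (-((m : ℤ) + 1)) = 0 := by
        rw [← Finsupp.single_add, show ((m : ℤ) + 1) + (-((m : ℤ) + 1)) = 0 by ring,
          Finsupp.single_zero]
      rw [hzero]
      rw [show (AddMonoidAlgebra.single (0 : ℤ →₀ ℤ) (1 : ℤ) : LR) = 1 from rfl, one_mul]
    -- f₁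
    have hkerf₁ : Scr (f - ((AddMonoidAlgebra.single (Finsupp.single ((N : ℤ) + 1) ((m : ℤ) + 1)) 1 : LR)
        * botSlice ((N : ℤ) + 1) (-((m : ℤ) + 1)) f)
          * (yv (N : ℤ) + yvinv ((N : ℤ) + 1)) ^ (m + 1)) = 0 := by
      have hfK : f ∈ Kc := hker
      have hhK : ((AddMonoidAlgebra.single (Finsupp.single ((N : ℤ) + 1) ((m : ℤ) + 1)) 1 : LR)
        * botSlice ((N : ℤ) + 1) (-((m : ℤ) + 1)) f) ∈ Kc := hScrh
      have htK : (yv (N : ℤ) + yvinv ((N : ℤ) + 1)) ∈ Kc := t_ker N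
      exact Kc.sub_mem hfK (Kc.mul_mem hhK (Subring.pow_mem Kc htK (m + 1)))
    have hyvmem : yv (N : ℤ) ∈ AOKs (N + 1) := by
      apply single_mem_suppSubring
      constructor
      · intro i hi
        rw [Finsupp.single_apply] at hi
        by_cases hc : (N : ℤ) = i
        · subst hc; constructor; omega; rw [hcast]; omega
        · rw [if_neg hc] at hi; omega
      · rw [Finsupp.single_apply]
        by_cases hc : (N : ℤ) = 0
        · rw [if_pos hc]; omega
        · rw [if_neg hc]
    have hyvinvmem : yvinv ((N : ℤ) + 1) ∈ AOKs (N + 1) := by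
      apply single_mem_suppSubring
      constructor
      · intro i hi
        rw [Finsupp.single_apply] at hi
        by_cases hc : (N : ℤ) + 1 = i
        · constructor; omega; rw [hcast]; omega
        · rw [if_neg hc] at hi; omega
      · rw [Finsupp.single_apply, if_neg (by omega)]
    have hsuppf₁ : ∀ d ∈ (f - ((AddMonoidAlgebra.single (Finsupp.single ((N : ℤ) + 1) ((m : ℤ) + 1)) 1 : LR)
        * botSlice ((N : ℤ) + 1) (-((m : ℤ) + 1)) f)
          * (yv (N : ℤ) + yvinv ((N : ℤ) + 1)) ^ (m + 1)).coeff.support, dOK (N + 1) d := by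
      have hfA : f ∈ AOKs (N + 1) := hsupp
      have hhA : ((AddMonoidAlgebra.single (Finsupp.single ((N : ℤ) + 1) ((m : ℤ) + 1)) 1 : LR)
        * botSlice ((N : ℤ) + 1) (-((m : ℤ) + 1)) f) ∈ AOKs (N + 1) :=
        fun d hd => dOK_mono (hsupph d hd)
      have htA : (yv (N : ℤ) + yvinv ((N : ℤ) + 1)) ∈ AOKs (N + 1) :=
        Subring.add_mem _ hyvmem hyvinvmem
      exact Subring.sub_mem _ hfA (Subring.mul_mem _ hhA (Subring.pow_mem _ htA (m + 1)))
    have hlevf₁ : ∀ d ∈ (f - ((AddMonoidAlgebra.single (Finsupp.single ((N : ℤ) + 1) ((m : ℤ) + 1)) 1 : LR)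
        * botSlice ((N : ℤ) + 1) (-((m : ℤ) + 1)) f)
          * (yv (N : ℤ) + yvinv ((N : ℤ) + 1)) ^ (m + 1)).coeff.support, -(m : ℤ) ≤ d ((N : ℤ) + 1) := by
      have hsplit : (f - ((AddMonoidAlgebra.single (Finsupp.single ((N : ℤ) + 1) ((m : ℤ) + 1)) 1 : LR)
          * botSlice ((N : ℤ) + 1) (-((m : ℤ) + 1)) f)
            * (yv (N : ℤ) + yvinv ((N : ℤ) + 1)) ^ (m + 1))
          = (f - botSlice ((N : ℤ) + 1) (-((m : ℤ) + 1)) f)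
            + (-(((AddMonoidAlgebra.single (Finsupp.single ((N : ℤ) + 1) ((m : ℤ) + 1)) 1 : LR)
              * botSlice ((N : ℤ) + 1) (-((m : ℤ) + 1)) f)
              * ((yv (N : ℤ) + yvinv ((N : ℤ) + 1)) ^ (m + 1)
                - (yvinv ((N : ℤ) + 1)) ^ (m + 1)))) := by
        rw [mul_sub, hhu]
        ring
      rw [hsplit]
      apply lv_add
      · -- f - φ is the filtered rest
        have hψ : (f - botSlice ((N : ℤ) + 1) (-((m : ℤ) + 1)) f).coeff
            = f.coeff.filter (fun d => ¬ (d ((N : ℤ) + 1) = -((m : ℤ) + 1))) := by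
          rw [AddMonoidAlgebra.coeff_sub, hφfil, sub_eq_iff_eq_add']
          exact (Finsupp.filter_pos_add_filter_neg f.coeff (fun d => d ((N : ℤ) + 1) = -((m : ℤ) + 1))).symm
        rw [hψ]
        intro d hd
        rw [Finsupp.support_filter, Finset.mem_filter] at hd
        have := hlev d hd.1
        have := hd.2
        omega
      · intro d hd
        rw [AddMonoidAlgebra.coeff_neg, Finsupp.support_neg] at hd
        have h0 : ∀ e ∈ ((AddMonoidAlgebra.single (Finsupp.single ((N : ℤ) + 1) ((m : ℤ) + 1)) 1 : LR)
            * botSlice ((N : ℤ) + 1) (-((m : ℤ) + 1)) f).coeff.support, (0 : ℤ) ≤ e ((N : ℤ) + 1) := by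
          intro e he
          have hOK := hsupph e he
          by_cases hz : e ((N : ℤ) + 1) = 0
          · omega
          · have := (hOK.1 _ hz).2
            omega
        have := lv_mul h0 (tu_pow_level N m) d hd
        omega
    -- conclude
    have hf₁T := ihm _ hsuppf₁ hlevf₁ hkerf₁
    have hfin : f = (f - ((AddMonoidAlgebra.single (Finsupp.single ((N : ℤ) + 1) ((m : ℤ) + 1)) 1 : LR)
        * botSlice ((N : ℤ) + 1) (-((m : ℤ) + 1)) f)
          * (yv (N : ℤ) + yvinv ((N : ℤ) + 1)) ^ (m + 1))
        + ((AddMonoidAlgebra.single (Finsupp.single ((N : ℤ) + 1) ((m : ℤ) + 1)) 1 : LR)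
        * botSlice ((N : ℤ) + 1) (-((m : ℤ) + 1)) f)
          * (yv (N : ℤ) + yvinv ((N : ℤ) + 1)) ^ (m + 1) := by ring
    rw [hfin]
    exact Subring.add_mem _ hf₁T
      (Subring.mul_mem _ hhT (Subring.pow_mem _ htT (m + 1)))

lemma FWD (N : ℕ) : ∀ (f : LR), (∀ d ∈ f.coeff.support, dOK N d) → Scr f = 0 → f ∈ Tsub := by
  induction N with
  | zero =>
    intro f hsupp hker
    apply mem_T_of_all_zero
    intro d hd
    have h1 := lemA 0 f (fun d hd => (hsupp d hd).1) hker d hd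
    have h2 := (hsupp d hd).2
    have h0 : d 0 = 0 := by
      have : ((0 : ℕ) : ℤ) = 0 := rfl
      rw [this] at h1
      omega
    ext i
    rw [Finsupp.coe_zero, Pi.zero_apply]
    by_cases hi : i = 0
    · rw [hi]; exact h0
    · by_contra hne
      obtain ⟨hl, hr⟩ := (hsupp d hd).1 i hne
      have : ((0 : ℕ) : ℤ) = 0 := rfl
      rw [this] at hr
      omega
  | succ N ih =>
    have inner : ∀ (m : ℕ) (f : LR), (∀ d ∈ f.coeff.support, dOK (N + 1) d) →
        (∀ d ∈ f.coeff.support, -(m : ℤ) ≤ d ((N : ℤ) + 1)) → Scr f = 0 → f ∈ Tsub := by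
      intro m
      induction m with
      | zero =>
        intro f hsupp hlev hker
        apply ih f ?_ hker
        intro d hd
        have hb' : ∀ d ∈ f.coeff.support, ∀ i : ℤ, d i ≠ 0 → 0 ≤ i ∧ i ≤ ((N + 1 : ℕ) : ℤ) :=
          fun d hd => (hsupp d hd).1
        have hle := lemA (N + 1) f hb' hker d hd
        have hge := hlev d hd
        have hcast : ((N + 1 : ℕ) : ℤ) = (N : ℤ) + 1 := by push_cast; ring
        rw [hcast] at hle
        constructor
        · intro i hi
          obtain ⟨hi0, hi1⟩ := (hsupp d hd).1 i hi
          rw [hcast] at hi1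
          refine ⟨hi0, ?_⟩
          rcases eq_or_lt_of_le hi1 with he | hl
          · exfalso
            rw [he] at hi
            exact hi (by omega)
          · omega
        · exact (hsupp d hd).2
      | succ m ihm =>
        intro f hsupp hlev hker
        refine step N m f hsupp ?_ hker ih ihm
        intro d hd
        have := hlev d hd
        push_cast at this
        omega
    intro f hsupp hker
    have hm : ∃ m : ℕ, ∀ d ∈ f.coeff.support, -(m : ℤ) ≤ d ((N : ℤ) + 1) := by
      refine ⟨f.coeff.support.sup fun d => (-(d ((N : ℤ) + 1))).toNat, ?_⟩
      intro d hd
      have h1 : (-(d ((N : ℤ) + 1))).toNat ≤ f.coeff.support.sup fun d => (-(d ((N : ℤ) + 1))).toNat :=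
        Finset.le_sup (f := fun d => (-(d ((N : ℤ) + 1))).toNat) hd
      omega
    obtain ⟨m, hmle⟩ := hm
    exact inner m f hsupp hmle hker

/-- the kernel of the screening operator `S`, restricted to the subring
`ℤ[y_n, y_{n+1}^{-1} : n ≥ 0]`, is exactly the polynomial subring `ℤ[t_n : n ≥ 0]`
where `t_n = y_n + y_{n+1}^{-1}`. -/
theorem stmt_6 (f : LR)
    (hf : f ∈ Subring.closure
      ({g | ∃ n : ℕ, g = yv n} ∪ {g | ∃ n : ℕ, g = yvinv ((n : ℤ) + 1)})) :
    Scr f = 0 ↔ f ∈ Subring.closure {g | ∃ n : ℕ, g = yv n + yvinv ((n : ℤ) + 1)} := by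
  constructor
  · intro hker
    -- hard direction
    have hA : f ∈ AOKall := by
      refine Subring.closure_le.mpr ?_ hf
      rintro g (⟨n, rfl⟩ | ⟨n, rfl⟩)
      · apply single_mem_suppSubring
        constructor
        · intro i hi
          rw [Finsupp.single_apply] at hi
          by_cases hc : (n : ℤ) = i
          · omega
          · rw [if_neg hc] at hi; omega
        · rw [Finsupp.single_apply]
          by_cases hc : (n : ℤ) = 0
          · rw [if_pos hc]; omega
          · rw [if_neg hc]
      · apply single_mem_suppSubring
        constructor
        · intro i hi
          rw [Finsupp.single_apply] at hi
          by_cases hc : (n : ℤ) + 1 = i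
          · omega
          · rw [if_neg hc] at hi; omega
        · rw [Finsupp.single_apply, if_neg (by omega)]
    have hfA : ∀ d ∈ f.coeff.support, dOKall d := hA
    set Nb : ℕ := f.coeff.support.sup fun d => d.support.sup fun i => i.toNat with hNb
    have hbN : ∀ d ∈ f.coeff.support, dOK Nb d := by
      intro d hd
      constructor
      · intro i hi
        refine ⟨(hfA d hd).1 i hi, ?_⟩
        have h1 : i.toNat ≤ d.support.sup fun i => i.toNat :=
          Finset.le_sup (f := fun i : ℤ => i.toNat) (Finsupp.mem_support_iff.mpr hi)
        have h2 : (d.support.sup fun i => i.toNat) ≤ Nb :=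
          Finset.le_sup (f := fun d : ℤ →₀ ℤ => d.support.sup fun i => i.toNat) hd
        omega
      · exact (hfA d hd).2
    exact FWD Nb f hbN hker
  · intro hT
    have hK : f ∈ Kc := by
      refine Subring.closure_le.mpr ?_ hT
      rintro g ⟨n, rfl⟩
      exact t_ker n
    exact hK
end

section
/- Let (C_{ij})_{1≤i,j≤ℓ} be a Cartan matrix of finite type with symmetrizers r_i, and define C_{ij}(x) = (x^{r_i}+x^{−r_i})δ_{ij} − [I_{ij}]_x in ℤ[x,x^{−1}], where I = 2·Id − C. Fix i ∈ {1,…,ℓ}. Suppose R_1(x),…,R_ℓ(x) ∈ ℤ[x,x^{−1}] all have nonnegative coefficients, and suppose that for every j ∈ {1,…,ℓ} the Laurent polynomial δ_{ij} − ∑_{k=1}^{ℓ} C_{jk}(x) R_k(x) has nonnegative coefficients. Then R_k(x) = 0 for all k. -/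
/-- The `q`-integer `[n]_x = (x^n − x^{−n})/(x − x^{−1}) = x^{n−1} + x^{n−3} + ⋯ + x^{−n+1}`
as a Laurent polynomial over `ℤ`, for `n ∈ ℤ` (with `[−n]_x = −[n]_x`). -/
noncomputable def lqint (n : ℤ) : LaurentPolynomial ℤ :=
  if 0 ≤ n then ∑ k ∈ Finset.range n.toNat, LaurentPolynomial.T (n - 1 - 2 * k)
  else -∑ k ∈ Finset.range (-n).toNat, LaurentPolynomial.T (-n - 1 - 2 * k)

/-- The coefficients of a Laurent polynomial over `ℤ` (a Laurent polynomial is,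
definitionally, a finitely supported function `ℤ →₀ ℤ` on exponents). -/
def lcoeff (p : LaurentPolynomial ℤ) : ℤ →₀ ℤ := p.coeff

/-! Compare the highest and the lowest degrees occurring in the `R_k`. Let `d` be the largest
value of `n + r_k` over the monomials `x^n` of all `R_k`, attained by `x^m` in `R_j`. Finite type
gives `I_{jk} ≤ r_k` for `j ≠ k`, so the only term of `∑_k C_{jk}(x) R_k(x)` reaching degree `d`
is `x^{r_j} R_j(x)`, with positive coefficient there; nonnegativity of
`δ_{ij} − ∑_k C_{jk}(x) R_k(x)` then forces `d = 0`, i.e. `n ≤ -r_k` for every monomial `x^n` of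
`R_k`. The matrix `C(x)` is invariant under `x ↦ x⁻¹`, so the same argument gives `n ≥ r_k`,
which is impossible since `r_k > 0`. -/

open LaurentPolynomial

lemma Matrix.PosDef.principal_pair_sum_pos {n : Type*} [Fintype n] [DecidableEq n]
    {M : Matrix n n ℝ} (hM : M.PosDef) {j k : n} (hjk : j ≠ k) :
    0 < M j j + M j k + M k j + M k k := by
  have hv : Pi.single j 1 + Pi.single k 1 ≠ (0 : n → ℝ) := fun h => by
    simpa [hjk] using congrFun h j
  have := hM.dotProduct_mulVec_pos hv
  simp only [star_trivial, Matrix.mulVec_add, Matrix.mulVec_single, add_dotProduct,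
    dotProduct_add, single_dotProduct] at this
  simp only [Pi.smul_apply, Matrix.col_apply, op_smul_eq_mul, one_mul, mul_one] at this
  linarith

theorem neg_entry_le_symmetrizer {ι : Type*} [Fintype ι] [DecidableEq ι]
    {C : Matrix ι ι ℤ} {r : ι → ℤ}
    (hdiag : ∀ i, C i i = 2) (hoff : ∀ i j, i ≠ j → C i j ≤ 0) (hrpos : ∀ i, 0 < r i)
    (hsym : ∀ i j, r i * C i j = r j * C j i)
    (hmin : ∀ i j, i ≠ j → min (r i) (2 * (if i = j then 1 else 0) - C i j) ≤ 1)
    (hposdef : (Matrix.of fun i j => ((r i * C i j : ℤ) : ℝ)).PosDef)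
    {j k : ι} (hjk : j ≠ k) : -C j k ≤ r k := by
  by_contra! hlt
  have hminjk := hmin j k hjk
  have hminkj := hmin k j hjk.symm
  rw [if_neg hjk, min_le_iff] at hminjk
  rw [if_neg hjk.symm, min_le_iff] at hminkj
  have := hrpos j
  have := hrpos k
  have hrj : r j = 1 := by omega
  have hCjk : C j k = r k * C k j := by simpa [hrj] using hsym j k
  obtain hCkj | hCkj | hCkj : C k j = 0 ∨ C k j = -1 ∨ C k j ≤ -2 := by
    have := hoff k j hjk.symm; omega
  · rw [hCkj, mul_zero] at hCjk; omega
  · rw [hCkj, mul_neg_one] at hCjk; omega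
  have hrk : r k = 1 := by omega
  rw [hrk, one_mul] at hCjk
  -- on `span(e_j, e_k)` the form is `2x² + 2 C_{jk} x y + 2y²`, not positive at `x = y = 1`
  have hpos := hposdef.principal_pair_sum_pos hjk
  simp only [Matrix.of_apply, hrj, hrk, hdiag, hCjk, one_mul] at hpos
  push_cast at hpos
  have : (C k j : ℝ) ≤ -2 := by exact_mod_cast hCkj
  linarith

@[simp] lemma lcoeff_zero : lcoeff 0 = 0 := rfl

@[simp] lemma lcoeff_one (n : ℤ) : lcoeff 1 n = if n = 0 then 1 else 0 := by
  rw [← T_zero, lcoeff, T_apply]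
  simp only [eq_comm]

@[simp] lemma lcoeff_add (p q : LaurentPolynomial ℤ) : lcoeff (p + q) = lcoeff p + lcoeff q := rfl

@[simp] lemma lcoeff_neg (p : LaurentPolynomial ℤ) : lcoeff (-p) = -lcoeff p := rfl

@[simp] lemma lcoeff_sub (p q : LaurentPolynomial ℤ) : lcoeff (p - q) = lcoeff p - lcoeff q := rfl

@[simp] lemma lcoeff_sum {α : Type*} (s : Finset α) (f : α → LaurentPolynomial ℤ) :
    lcoeff (∑ a ∈ s, f a) = ∑ a ∈ s, lcoeff (f a) :=
  AddMonoidAlgebra.coeff_sum s f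

@[simp] lemma lcoeff_invert (p : LaurentPolynomial ℤ) (n : ℤ) :
    lcoeff (invert p) n = lcoeff p (-n) :=
  invert_apply p n

lemma lcoeff_T_mul (m : ℤ) (p : LaurentPolynomial ℤ) (n : ℤ) :
    lcoeff (T m * p) n = lcoeff p (n - m) := by
  rw [lcoeff, lcoeff, T, AddMonoidAlgebra.coeff_single_mul_apply, one_mul, neg_add_eq_sub]

lemma lcoeff_eq_zero_iff {p : LaurentPolynomial ℤ} : lcoeff p = 0 ↔ p = 0 :=
  AddMonoidAlgebra.coeff_eq_zero

lemma lqint_of_nonneg {n : ℤ} (hn : 0 ≤ n) :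
    lqint n = ∑ t ∈ Finset.range n.toNat, T (n - 1 - 2 * t) := if_pos hn

lemma invert_lqint (n : ℤ) : invert (lqint n) = lqint n := by
  have hsymm : ∀ m : ℤ, 0 ≤ m →
      invert (∑ t ∈ Finset.range m.toNat, (T (m - 1 - 2 * t) : LaurentPolynomial ℤ)) =
        ∑ t ∈ Finset.range m.toNat, T (m - 1 - 2 * t) := by
    intro m hm
    obtain ⟨m, rfl⟩ := Int.eq_ofNat_of_zero_le hm
    rw [Int.toNat_natCast, map_sum, ← Finset.sum_range_reflect]
    refine Finset.sum_congr rfl fun t ht => ?_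
    rw [invert_T]
    congr 1
    have := Finset.mem_range.mp ht
    push_cast [Nat.sub_sub, Nat.cast_sub (by omega : 1 + t ≤ m)]
    ring
  unfold lqint
  split_ifs with hn
  · exact hsymm n hn
  · rw [map_neg, hsymm (-n) (by omega)]

lemma lcoeff_lqint_mul_eq_zero {n d : ℤ} (hn : 0 ≤ n) {p : LaurentPolynomial ℤ}
    (hp : ∀ m, d - n < m → lcoeff p m = 0) : lcoeff (lqint n * p) d = 0 := by
  rw [lqint_of_nonneg hn, Finset.sum_mul, lcoeff_sum, Finset.sum_apply']
  refine Finset.sum_eq_zero fun t _ => ?_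
  rw [lcoeff_T_mul]
  exact hp _ (by omega)

noncomputable def qCartan {ι : Type*} [DecidableEq ι] (C : Matrix ι ι ℤ) (r : ι → ℤ) (j k : ι) :
    LaurentPolynomial ℤ :=
  (if j = k then T (r j) + T (-(r j)) else 0) - lqint (2 * (if j = k then 1 else 0) - C j k)

section qCartan

variable {ι : Type*} [DecidableEq ι] {C : Matrix ι ι ℤ} {r : ι → ℤ}

lemma qCartan_self {j : ι} (hjj : C j j = 2) : qCartan C r j j = T (r j) + T (-(r j)) := by
  simp [qCartan, hjj, lqint]

lemma qCartan_of_ne {j k : ι} (hjk : j ≠ k) : qCartan C r j k = -lqint (-C j k) := by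
  simp [qCartan, hjk]

lemma invert_qCartan (j k : ι) : invert (qCartan C r j k) = qCartan C r j k := by
  rw [qCartan, map_sub, invert_lqint]
  split_ifs
  · rw [map_add, invert_T, invert_T, neg_neg, add_comm]
  · rw [map_zero]

lemma invert_sub_sum_qCartan_mul [Fintype ι] (i j : ι) (R : ι → LaurentPolynomial ℤ) :
    invert ((if i = j then 1 else 0) - ∑ k, qCartan C r j k * R k) =
      (if i = j then 1 else 0) - ∑ k, qCartan C r j k * invert (R k) := by
  simp only [map_sub, map_sum, map_mul, invert_qCartan, apply_ite invert, map_one, map_zero]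

end qCartan

section CartanRow

variable {ι : Type*} [Fintype ι] [DecidableEq ι] {C : Matrix ι ι ℤ} {r : ι → ℤ}
  (hdiag : ∀ j, C j j = 2) (hoff : ∀ j k, j ≠ k → C j k ≤ 0) (hrpos : ∀ j, 0 < r j)
  (hI : ∀ j k, j ≠ k → -C j k ≤ r k)
include hdiag hoff hrpos hI

lemma lcoeff_sum_qCartan_mul {R : ι → LaurentPolynomial ℤ} {d : ℤ}
    (hvanish : ∀ k n, d < n + r k → lcoeff (R k) n = 0) (j : ι) :
    lcoeff (∑ k, qCartan C r j k * R k) d = lcoeff (R j) (d - r j) := by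
  rw [lcoeff_sum, Finset.sum_apply', Finset.sum_eq_single_of_mem j (Finset.mem_univ j)]
  · rw [qCartan_self (hdiag j), add_mul, lcoeff_add, Finsupp.add_apply, lcoeff_T_mul, lcoeff_T_mul,
      hvanish j (d - -r j) (by linarith [hrpos j]), add_zero]
  · intro k _ hkj
    rw [qCartan_of_ne hkj.symm, neg_mul, lcoeff_neg, Finsupp.neg_apply,
      lcoeff_lqint_mul_eq_zero (by linarith [hoff j k hkj.symm]), neg_zero]
    exact fun m hm => hvanish k m (by linarith [hI j k hkj.symm])

variable {i : ι} {R : ι → LaurentPolynomial ℤ} (hR : ∀ k n, 0 ≤ lcoeff (R k) n)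
  (hker : ∀ j n, 0 ≤ lcoeff ((if i = j then 1 else 0) - ∑ k, qCartan C r j k * R k) n)
include hR hker

theorem add_le_zero_of_lcoeff_ne_zero {k : ι} {n : ℤ} (hkn : lcoeff (R k) n ≠ 0) :
    n + r k ≤ 0 := by
  let S := Finset.univ.sigma fun k => (lcoeff (R k)).support
  obtain ⟨⟨j, m⟩, hjm, hmax⟩ :=
    S.exists_max_image (fun x => x.2 + r x.1) ⟨⟨k, n⟩, by simpa [S] using hkn⟩
  have hvanish : ∀ k' n', m + r j < n' + r k' → lcoeff (R k') n' = 0 := fun k' n' hlt => by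
    by_contra hne
    exact (hmax ⟨k', n'⟩ (by simpa [S] using hne)).not_gt hlt
  have hlead : 0 < lcoeff (R j) m := (hR j m).lt_of_ne' (by simpa [S] using hjm)
  have hrow := hker j (m + r j)
  rw [lcoeff_sub, Finsupp.sub_apply, lcoeff_sum_qCartan_mul hdiag hoff hrpos hI hvanish,
    add_sub_cancel_right] at hrow
  have htop : m + r j = 0 := by
    split_ifs at hrow
    · by_contra hne
      simp only [lcoeff_one, if_neg hne] at hrow
      omega
    · simp only [lcoeff_zero, Finsupp.coe_zero, Pi.zero_apply] at hrow
      omega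
  simpa [htop] using hmax ⟨k, n⟩ (by simpa [S] using hkn)

theorem le_of_lcoeff_ne_zero {k : ι} {n : ℤ} (hkn : lcoeff (R k) n ≠ 0) : r k ≤ n := by
  have hR' : ∀ k n, 0 ≤ lcoeff (invert (R k)) n := fun k n => by simpa using hR k (-n)
  have hker' : ∀ j n, 0 ≤ lcoeff ((if i = j then 1 else 0) -
      ∑ k, qCartan C r j k * invert (R k)) n := fun j n => by
    rw [← invert_sub_sum_qCartan_mul, lcoeff_invert]
    exact hker j (-n)
  have := add_le_zero_of_lcoeff_ne_zero hdiag hoff hrpos hI hR' hker' (k := k) (n := -n)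
    (by simpa using hkn)
  omega

end CartanRow

/-- let `C` be a Cartan matrix of finite type (diagonal `2`,
nonpositive off-diagonal entries, symmetrizers `r_i ≥ 1` with `r_i C_{ij}` symmetric and
positive definite, and `min(r_i, I_{ij}) ≤ 1` for `i ≠ j`, where `I = 2·Id − C`), and set
`C_{jk}(x) = (x^{r_j} + x^{−r_j})δ_{jk} − [I_{jk}]_x`.  Fix `i`.  If
`R_1(x), …, R_ℓ(x) ∈ ℤ[x,x^{−1}]` have nonnegative coefficients and, for every `j`,
`δ_{ij} − ∑_k C_{jk}(x) R_k(x)` has nonnegative coefficients, then all `R_k = 0`. -/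
theorem stmt_7 (ℓ : ℕ) (C : Matrix (Fin ℓ) (Fin ℓ) ℤ) (r : Fin ℓ → ℤ)
    (hdiag : ∀ i, C i i = 2)
    (hoff : ∀ i j, i ≠ j → C i j ≤ 0)
    (hrpos : ∀ i, 0 < r i)
    (hsym : ∀ i j, r i * C i j = r j * C j i)
    (hmin : ∀ i j, i ≠ j → min (r i) (2 * (if i = j then 1 else 0) - C i j) ≤ 1)
    (hposdef : (Matrix.of fun i j => ((r i * C i j : ℤ) : ℝ)).PosDef)
    (i : Fin ℓ) (R : Fin ℓ → LaurentPolynomial ℤ)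
    (hR : ∀ k, ∀ n : ℤ, 0 ≤ lcoeff (R k) n)
    (hker : ∀ j, ∀ n : ℤ, 0 ≤ lcoeff
      ((if i = j then 1 else 0) -
        ∑ k, ((if j = k then LaurentPolynomial.T (r j) + LaurentPolynomial.T (-(r j)) else 0)
            - lqint (2 * (if j = k then 1 else 0) - C j k)) * R k) n) :
    ∀ k, R k = 0 := by
  have hI : ∀ j k, j ≠ k → -C j k ≤ r k := fun j k hjk =>
    neg_entry_le_symmetrizer hdiag hoff hrpos hsym hmin hposdef hjk
  intro k
  rw [← lcoeff_eq_zero_iff]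
  ext n
  by_contra hkn
  have htop := add_le_zero_of_lcoeff_ne_zero hdiag hoff hrpos hI hR hker hkn
  have hbot := le_of_lcoeff_ne_zero hdiag hoff hrpos hI hR hker hkn
  linarith [hrpos k]
end

section
/- Let K be a field, q ∈ K not a root of unity, c ∈ K with c ≠ 0, and let f ∈ K[[z]] be a formal power series with f(0) = c². Then there exists a unique formal power series Y ∈ K[[z]] with constant term Y(0) = c such that Y(zq)·Y(zq^{−1}) = f(z) in K[[z]]. -/
/-!
Comparing coefficients of `z^n` in `Y(zq) Y(zq⁻¹) = f(z)` gives, for `n ≥ 1`,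
`c (qⁿ + q⁻ⁿ) yₙ + ∑_{0<k<n} q^{2k-n} y_k y_{n-k} = fₙ`, and `qⁿ + q⁻ⁿ ≠ 0` because otherwise
`q^{4n} = 1`. So the coefficients of `Y` are forced, one after the other, by a recursion whose
solution exists and is unique.
-/

open PowerSeries Finset

section CrossTerms

variable {R : Type*} [CommSemiring R]

/-- The part of `∑_{i+j=n+1} aⁱ bʲ yᵢ yⱼ` with `i, j ≥ 1`. -/
def crossSum (a b : R) (y : ℕ → R) (n : ℕ) : R :=
  ∑ k ∈ range n, a ^ (k + 1) * y (k + 1) * (b ^ (n - k) * y (n - k))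

theorem crossSum_congr (a b : R) {y y' : ℕ → R} {n : ℕ} (h : ∀ m ≤ n, y m = y' m) :
    crossSum a b y n = crossSum a b y' n :=
  sum_congr rfl fun k hk => by
    rw [mem_range] at hk
    rw [h (k + 1) (by omega), h (n - k) (by omega)]

theorem coeff_rescale_mul_rescale (a b : R) (Y Z : R⟦X⟧) (n : ℕ) :
    coeff n (rescale a Y * rescale b Z) =
      ∑ p ∈ antidiagonal n, a ^ p.1 * coeff p.1 Y * (b ^ p.2 * coeff p.2 Z) := by
  simp only [coeff_mul, coeff_rescale]

theorem coeff_succ_rescale_mul_rescale (a b : R) (Y : R⟦X⟧) (n : ℕ) :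
    coeff (n + 1) (rescale a Y * rescale b Y) =
      (a ^ (n + 1) + b ^ (n + 1)) * coeff 0 Y * coeff (n + 1) Y +
        crossSum a b (fun m => coeff m Y) n := by
  rw [coeff_rescale_mul_rescale, Nat.sum_antidiagonal_eq_sum_range_succ_mk, sum_range_succ,
    sum_range_succ', crossSum]
  simp only [Nat.succ_sub_succ, Nat.sub_self, Nat.sub_zero, pow_zero, one_mul]
  ring

end CrossTerms

theorem pow_add_inv_pow_ne_zero {K : Type*} [Field K] {q : K} (hq : q ≠ 0)
    (hroot : ∀ n : ℕ, n ≠ 0 → q ^ n ≠ 1) {n : ℕ} (hn : n ≠ 0) : q ^ n + q⁻¹ ^ n ≠ 0 := by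
  intro h
  have hsq : (q ^ n) ^ 2 = -1 := by
    have : q⁻¹ ^ n * q ^ n = 1 := by rw [← mul_pow, inv_mul_cancel₀ hq, one_pow]
    linear_combination q ^ n * h - this
  refine hroot (4 * n) (by omega) ?_
  calc q ^ (4 * n) = ((q ^ n) ^ 2) ^ 2 := by ring
    _ = 1 := by rw [hsq]; norm_num

section TwistedSqrt

variable {K : Type*} [Field K]

/-- The coefficients of the solution `Y` of `Y(zq) Y(zq⁻¹) = f(z)` with `Y(0) = c`. -/
noncomputable def twistedSqrtCoeff (q c : K) (f : K⟦X⟧) : ℕ → K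
  | 0 => c
  | n + 1 => (coeff (n + 1) f - ∑ k : Fin n,
      q ^ ((k : ℕ) + 1) * twistedSqrtCoeff q c f (k + 1) *
        (q⁻¹ ^ (n - k) * twistedSqrtCoeff q c f (n - k))) / (c * (q ^ (n + 1) + q⁻¹ ^ (n + 1)))
  decreasing_by all_goals omega

theorem twistedSqrtCoeff_zero (q c : K) (f : K⟦X⟧) : twistedSqrtCoeff q c f 0 = c := by
  rw [twistedSqrtCoeff]

theorem twistedSqrtCoeff_succ (q c : K) (f : K⟦X⟧) (n : ℕ) :
    twistedSqrtCoeff q c f (n + 1) = (coeff (n + 1) f - crossSum q q⁻¹ (twistedSqrtCoeff q c f) n) /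
      (c * (q ^ (n + 1) + q⁻¹ ^ (n + 1))) := by
  rw [twistedSqrtCoeff, crossSum, Fin.sum_univ_eq_sum_range (fun k =>
    q ^ (k + 1) * twistedSqrtCoeff q c f (k + 1) * (q⁻¹ ^ (n - k) * twistedSqrtCoeff q c f (n - k)))]

theorem eq_twistedSqrtCoeff {q c : K} {f : K⟦X⟧} {y : ℕ → K} (h0 : y 0 = c)
    (hsucc : ∀ n, y (n + 1) = (coeff (n + 1) f - crossSum q q⁻¹ y n) /
      (c * (q ^ (n + 1) + q⁻¹ ^ (n + 1)))) :
    y = twistedSqrtCoeff q c f := by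
  funext n
  induction n using Nat.strong_induction_on with
  | _ n ih =>
    match n with
    | 0 => rw [h0, twistedSqrtCoeff_zero]
    | n + 1 =>
      rw [hsucc, twistedSqrtCoeff_succ, crossSum_congr q q⁻¹ fun m hm => ih m (by omega)]

theorem rescale_mul_rescale_inv_eq_iff {q c : K} (hd : ∀ n : ℕ, c * (q ^ (n + 1) + q⁻¹ ^ (n + 1)) ≠ 0)
    {Y f : K⟦X⟧} (hY : constantCoeff Y = c) :
    rescale q Y * rescale q⁻¹ Y = f ↔ constantCoeff f = c ^ 2 ∧
      ∀ n, coeff (n + 1) Y = (coeff (n + 1) f - crossSum q q⁻¹ (fun m => coeff m Y) n) /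
        (c * (q ^ (n + 1) + q⁻¹ ^ (n + 1))) := by
  have hsucc (n : ℕ) : coeff (n + 1) (rescale q Y * rescale q⁻¹ Y) = coeff (n + 1) f ↔
      coeff (n + 1) Y = (coeff (n + 1) f - crossSum q q⁻¹ (fun m => coeff m Y) n) /
        (c * (q ^ (n + 1) + q⁻¹ ^ (n + 1))) := by
    rw [coeff_succ_rescale_mul_rescale, coeff_zero_eq_constantCoeff_apply, hY,
      eq_div_iff (hd n), eq_sub_iff_add_eq]
    constructor <;> intro h <;> linear_combination h
  have h0 : coeff 0 (rescale q Y * rescale q⁻¹ Y) = c ^ 2 := by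
    simp only [coeff_rescale_mul_rescale, Nat.antidiagonal_zero, sum_singleton, pow_zero, one_mul,
      coeff_zero_eq_constantCoeff_apply, hY, sq]
  rw [PowerSeries.ext_iff]
  refine ⟨fun h => ⟨?_, fun n => (hsucc n).1 (h (n + 1))⟩, fun ⟨hf, hs⟩ n => ?_⟩
  · rw [← coeff_zero_eq_constantCoeff_apply, ← h 0, h0]
  · cases n with
    | zero => rw [h0, coeff_zero_eq_constantCoeff_apply, hf]
    | succ n => exact (hsucc n).2 (hs n)

end TwistedSqrt

/-- let `K` be a field, `q ∈ K` nonzero and not a root of unity, `c ≠ 0`,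
and `f ∈ K[[z]]` with constant term `c²`.  Then there is a unique power series
`Y ∈ K[[z]]` with constant term `c` such that `Y(zq)·Y(zq^{-1}) = f(z)`. -/
theorem stmt_9 {K : Type*} [Field K] (q : K) (hq : q ≠ 0)
    (hroot : ∀ n : ℕ, n ≠ 0 → q ^ n ≠ 1)
    (c : K) (hc : c ≠ 0) (f : PowerSeries K)
    (hf : PowerSeries.constantCoeff f = c ^ 2) :
    ∃! Y : PowerSeries K, PowerSeries.constantCoeff Y = c ∧
      PowerSeries.rescale q Y * PowerSeries.rescale q⁻¹ Y = f := by
  have hd (n : ℕ) : c * (q ^ (n + 1) + q⁻¹ ^ (n + 1)) ≠ 0 :=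
    mul_ne_zero hc (pow_add_inv_pow_ne_zero hq hroot n.succ_ne_zero)
  have hY₀ : constantCoeff (mk (twistedSqrtCoeff q c f)) = c := by
    rw [← coeff_zero_eq_constantCoeff_apply, coeff_mk, twistedSqrtCoeff_zero]
  refine ⟨mk (twistedSqrtCoeff q c f), ⟨hY₀, ?_⟩, fun Y ⟨hY, hYf⟩ => ?_⟩
  · refine (rescale_mul_rescale_inv_eq_iff hd hY₀).2 ⟨hf, fun n => ?_⟩
    simp only [coeff_mk, twistedSqrtCoeff_succ]
  · obtain ⟨-, hrec⟩ := (rescale_mul_rescale_inv_eq_iff hd hY).1 hYf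
    have hcoeff := eq_twistedSqrtCoeff (y := fun m => coeff m Y)
      (by rwa [coeff_zero_eq_constantCoeff_apply]) hrec
    ext n
    rw [coeff_mk, ← hcoeff]
end
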